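/- arXiv:1903.09165 — 2 statements merged into one kernel-verified Lean document; each statement's English description precedes it below -/
import Mathlib

section
/- Let D ≥ 3 and let c be the real Lie algebra with basis {J_{ab} = −J_{ba} : 1 ≤ a < b ≤ D} ∪ {B_a, P_a : 1 ≤ a ≤ D} ∪ {H} and nonzero brackets [J_{ab},J_{cd}] = δ_{bc}J_{ad} + δ_{ad}J_{bc} − δ_{bd}J_{ac} − δ_{ac}J_{bd}, [J_{ab},B_c] = δ_{cb}B_a − δ_{ca}B_b, [J_{ab},P_c] = δ_{cb}P_a − δ_{ca}P_b, [B_a,P_b] = δ_{ab}H (the Carroll algebra in D+1 dimensions). Then c is perfect, H spans a nonzero central element, and consequently c admits no nondegenerate invariant symmetric bilinear form. -/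
/-- The Kronecker delta. -/
def kron {D : ℕ} (a b : Fin D) : ℝ := if a = b then 1 else 0

/-- The basis family of the Carroll algebra in `D+1` dimensions: the `J_{ab}` with `a < b`,
the boosts `B_a`, the spatial translations `P_a` and the time translation `H`. -/
def carrollFam {D : ℕ} {g : Type*} (J : Fin D → Fin D → g) (B P : Fin D → g) (H : g) :
    ({p : Fin D × Fin D // p.1 < p.2} ⊕ (Fin D ⊕ (Fin D ⊕ Unit))) → g
  | Sum.inl p => J p.1.1 p.1.2
  | Sum.inr (Sum.inl a) => B a
  | Sum.inr (Sum.inr (Sum.inl a)) => P a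
  | Sum.inr (Sum.inr (Sum.inr _)) => H

/-!
Every basis vector is a bracket: `J_ab = ⁅J_ac, J_cb⁆` for an index `c ∉ {a, b}`, which exists
because `D ≥ 3`, and `B_a = ⁅J_ac, B_c⁆`, `P_a = ⁅J_ac, P_c⁆`, `H = ⁅B_a, P_a⁆`. For an invariant
form `Bil`, `Bil H ⁅x, y⁆ = -Bil ⁅x, H⁆ y = 0` since `H` is central, so by perfectness `H` lies in
the radical of `Bil`.
-/

section LieAlgebra

variable {R L : Type*} [CommRing R] [LieRing L] [LieAlgebra R L]

theorem lie_eq_zero_of_span_eq_top {s : Set L} (hs : Submodule.span R s = ⊤) {z : L}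
    (hz : ∀ y ∈ s, ⁅z, y⁆ = 0) (x : L) : ⁅z, x⁆ = 0 :=
  LinearMap.congr_fun (LinearMap.ext_on hs (f := LieModule.toEnd R L L z) (g := 0) hz) x

theorem invariant_form_central_eq_zero_of_perfect
    (hperf : Submodule.span R {w : L | ∃ x y : L, ⁅x, y⁆ = w} = ⊤) {z : L}
    (hz : ∀ x : L, ⁅z, x⁆ = 0) (Bil : L →ₗ[R] L →ₗ[R] R)
    (hinv : ∀ x y w : L, Bil ⁅w, x⁆ y + Bil x ⁅w, y⁆ = 0) : Bil z = 0 := by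
  refine LinearMap.ext_on hperf ?_
  rintro _ ⟨x, y, rfl⟩
  simpa [← lie_skew x z, hz] using hinv z y x

theorem eq_zero_of_central_of_perfect
    (hperf : Submodule.span R {w : L | ∃ x y : L, ⁅x, y⁆ = w} = ⊤) {z : L}
    (hz : ∀ x : L, ⁅z, x⁆ = 0) (Bil : L →ₗ[R] L →ₗ[R] R)
    (hinv : ∀ x y w : L, Bil ⁅w, x⁆ y + Bil x ⁅w, y⁆ = 0)
    (hnd : ∀ x : L, (∀ y : L, Bil x y = 0) → x = 0) : z = 0 :=
  hnd z fun y => by rw [invariant_form_central_eq_zero_of_perfect hperf hz Bil hinv]; rfl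

end LieAlgebra

section Carroll

variable {D : ℕ} {g : Type*} [LieRing g] {J : Fin D → Fin D → g} {B P : Fin D → g} {H : g}

theorem carrollFam_mem_brackets [LieAlgebra ℝ g] (hD : 3 ≤ D)
    (hJJ : ∀ a b c d, ⁅J a b, J c d⁆ =
      kron b c • J a d + kron a d • J b c - kron b d • J a c - kron a c • J b d)
    (hJB : ∀ a b c, ⁅J a b, B c⁆ = kron c b • B a - kron c a • B b)
    (hJP : ∀ a b c, ⁅J a b, P c⁆ = kron c b • P a - kron c a • P b)
    (hBP : ∀ a b, ⁅B a, P b⁆ = kron a b • H) (i) :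
    ∃ x y : g, ⁅x, y⁆ = carrollFam J B P H i := by
  have hthird (a b : Fin D) : ∃ c, c ≠ a ∧ c ≠ b := Fin.exists_ne_and_ne_of_two_lt a b hD
  rcases i with ⟨⟨a, b⟩, hab⟩ | a | a | _
  · obtain ⟨c, hca, hcb⟩ := hthird a b
    refine ⟨J a c, J c b, ?_⟩
    simp [hJJ, carrollFam, kron, hcb, hab.ne, hca.symm]
  · obtain ⟨c, hca, -⟩ := hthird a a
    exact ⟨J a c, B c, by simp [hJB, carrollFam, kron, hca]⟩
  · obtain ⟨c, hca, -⟩ := hthird a a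
    exact ⟨J a c, P c, by simp [hJP, carrollFam, kron, hca]⟩
  · exact ⟨B ⟨0, by omega⟩, P ⟨0, by omega⟩, by simp [hBP, carrollFam, kron]⟩

theorem lie_carrollFam_eq_zero (hBH : ∀ a, ⁅B a, H⁆ = 0) (hPH : ∀ a, ⁅P a, H⁆ = 0)
    (hJH : ∀ a b, ⁅J a b, H⁆ = 0) (i) : ⁅H, carrollFam J B P H i⁆ = 0 := by
  rw [← lie_skew, neg_eq_zero]
  rcases i with ⟨⟨a, b⟩, -⟩ | a | a | _
  exacts [hJH a b, hBH a, hPH a, lie_self H]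

end Carroll

theorem carroll_perfect_center_no_metric_general
    (D : ℕ) (hD : 3 ≤ D)
    (g : Type*) [LieRing g] [LieAlgebra ℝ g]
    (J : Fin D → Fin D → g) (B P : Fin D → g) (H : g)
    (hindep : LinearIndependent ℝ (carrollFam J B P H))
    (hspan : Submodule.span ℝ (Set.range (carrollFam J B P H)) = ⊤)
    (hJJ : ∀ a b c d, ⁅J a b, J c d⁆ =
      kron b c • J a d + kron a d • J b c - kron b d • J a c - kron a c • J b d)
    (hJB : ∀ a b c, ⁅J a b, B c⁆ = kron c b • B a - kron c a • B b)
    (hJP : ∀ a b c, ⁅J a b, P c⁆ = kron c b • P a - kron c a • P b)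
    (hBP : ∀ a b, ⁅B a, P b⁆ = kron a b • H)
    (hBH : ∀ a, ⁅B a, H⁆ = 0)
    (hPH : ∀ a, ⁅P a, H⁆ = 0)
    (hJH : ∀ a b, ⁅J a b, H⁆ = 0) :
    Submodule.span ℝ {w : g | ∃ x y : g, ⁅x, y⁆ = w} = ⊤ ∧
    (H ≠ 0 ∧ ∀ x : g, ⁅H, x⁆ = 0) ∧
    ¬ ∃ Bil : g →ₗ[ℝ] g →ₗ[ℝ] ℝ,
        (∀ x y : g, Bil x y = Bil y x) ∧
        (∀ x y z : g, Bil ⁅z, x⁆ y + Bil x ⁅z, y⁆ = 0) ∧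
        (∀ x : g, (∀ y : g, Bil x y = 0) → x = 0) := by
  have hperfect : Submodule.span ℝ {w : g | ∃ x y : g, ⁅x, y⁆ = w} = ⊤ :=
    top_unique <| hspan ▸ Submodule.span_mono
      (Set.range_subset_iff.2 (carrollFam_mem_brackets hD hJJ hJB hJP hBP))
  have hcentral : ∀ x : g, ⁅H, x⁆ = 0 :=
    lie_eq_zero_of_span_eq_top hspan (Set.forall_mem_range.2 (lie_carrollFam_eq_zero hBH hPH hJH))
  have hH : H ≠ 0 := hindep.ne_zero (Sum.inr (Sum.inr (Sum.inr ())))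
  refine ⟨hperfect, ⟨hH, hcentral⟩, ?_⟩
  rintro ⟨Bil, -, hinv, hnd⟩
  exact hH (eq_zero_of_central_of_perfect hperfect hcentral Bil hinv hnd)

/-- For `D ≥ 3`, the Carroll algebra in `D+1` dimensions is perfect, `H`
spans a nonzero central element, and consequently the algebra admits no nondegenerate
invariant symmetric bilinear form. -/
theorem carroll_perfect_center_no_metric
    (D : ℕ) (hD : 3 ≤ D)
    (g : Type*) [LieRing g] [LieAlgebra ℝ g]
    (J : Fin D → Fin D → g) (B P : Fin D → g) (H : g)
    (hJanti : ∀ a b, J a b = - J b a)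
    (hindep : LinearIndependent ℝ (carrollFam J B P H))
    (hspan : Submodule.span ℝ (Set.range (carrollFam J B P H)) = ⊤)
    (hJJ : ∀ a b c d, ⁅J a b, J c d⁆ =
      kron b c • J a d + kron a d • J b c - kron b d • J a c - kron a c • J b d)
    (hJB : ∀ a b c, ⁅J a b, B c⁆ = kron c b • B a - kron c a • B b)
    (hJP : ∀ a b c, ⁅J a b, P c⁆ = kron c b • P a - kron c a • P b)
    (hBP : ∀ a b, ⁅B a, P b⁆ = kron a b • H)
    (hBB : ∀ a b, ⁅B a, B b⁆ = 0)
    (hPP : ∀ a b, ⁅P a, P b⁆ = 0)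
    (hBH : ∀ a, ⁅B a, H⁆ = 0)
    (hPH : ∀ a, ⁅P a, H⁆ = 0)
    (hJH : ∀ a b, ⁅J a b, H⁆ = 0) :
    Submodule.span ℝ {w : g | ∃ x y : g, ⁅x, y⁆ = w} = ⊤ ∧
    (H ≠ 0 ∧ ∀ x : g, ⁅H, x⁆ = 0) ∧
    ¬ ∃ Bil : g →ₗ[ℝ] g →ₗ[ℝ] ℝ,
        (∀ x y : g, Bil x y = Bil y x) ∧
        (∀ x y z : g, Bil ⁅z, x⁆ y + Bil x ⁅z, y⁆ = 0) ∧
        (∀ x : g, (∀ y : g, Bil x y = 0) → x = 0) :=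
  carroll_perfect_center_no_metric_general D hD g J B P H hindep hspan hJJ hJB hJP hBP hBH hPH hJH
end

section
/- Fix D ≥ 2, a sign σ ∈ {1,−1}, and real numbers Λ, χ_B, χ_H, χ_J. Consider the real vector space with basis {J_{ab} = −J_{ba}}, {B_a}, {P_a}, {H}, {J*_{ab} = −J*_{ba}}, {H*} (indices in {1,…,D}) and nonzero brackets: [J_{ab},J_{cd}] = δ_{bc}J_{ad} + δ_{ad}J_{bc} − δ_{bd}J_{ac} − δ_{ac}J_{bd}, the same pattern for [J_{ab},J*_{cd}] with J* in place of J on the right, [J_{ab},B_c] = δ_{cb}B_a − δ_{ca}B_b, [J_{ab},P_c] = δ_{cb}P_a − δ_{ca}P_b, [B_a,H] = P_a, [P_a,H] = −σΛ²B_a, [B_a,B_b] = −χ_B J*_{ab}, [P_a,P_b] = −σΛ²χ_B J*_{ab}, [B_a,P_b] = −σΛ²χ_B δ_{ab}H* (the extended (A)dS-Galilei algebra in D+1 dimensions). Then this bracket satisfies the Jacobi identity; the symmetric bilinear form determined by B(B_a,B_b) = χ_Bδ_{ab}, B(P_a,P_b) = σΛ²χ_Bδ_{ab}, B(J_{ab},J*_{cd})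 = δ_{ac}δ_{bd} − δ_{ad}δ_{bc}, B(H,H*) = 1, B(H,H) = χ_H, B(J_{ab},J_{cd}) = χ_J(δ_{ac}δ_{bd} − δ_{ad}δ_{bc}), with all other basis pairings zero, is invariant; and this form is nondegenerate if and only if Λ²χ_B ≠ 0. -/
/-- The basis family of the extended (A)dS-Galilei algebra in `D+1` dimensions: the rotations
`J_{ab}` (`a < b`), boosts `B_a`, spatial translations `P_a`, time translation `H`, and the
extension generators `J*_{ab}` (`a < b`) and `H*`. -/
def adsGalExtFam {D : ℕ} {V : Type*} (J : Fin D → Fin D → V) (B P : Fin D → V) (H : V)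
    (Js : Fin D → Fin D → V) (Hs : V) :
    ({p : Fin D × Fin D // p.1 < p.2} ⊕ (Fin D ⊕ (Fin D ⊕ (Unit ⊕
      ({p : Fin D × Fin D // p.1 < p.2} ⊕ Unit))))) → V
  | Sum.inl p => J p.1.1 p.1.2
  | Sum.inr (Sum.inl a) => B a
  | Sum.inr (Sum.inr (Sum.inl a)) => P a
  | Sum.inr (Sum.inr (Sum.inr (Sum.inl _))) => H
  | Sum.inr (Sum.inr (Sum.inr (Sum.inr (Sum.inl p)))) => Js p.1.1 p.1.2
  | Sum.inr (Sum.inr (Sum.inr (Sum.inr (Sum.inr _)))) => Hs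

/-!
The Jacobiator and the defect `B([z,x],y) + B(x,[z,y])` are trilinear, so it suffices that they
vanish on triples of generators, which is a finite computation with Kronecker deltas.

For nondegeneracy: `B_a` pairs only with itself (weight `χ_B`), `P_a` only with itself (weight
`σΛ²χ_B`), `J*_{ab}` only with `J_{ab}` and `H*` only with `H`. Pairing a radical vector with `B_a`,
`P_a`, `J*_{ab}` and `H*` kills its `B`, `P`, `J` and `H` coordinates; pairing it then with
`J_{ab}` and `H` kills the rest. Conversely, if `Λ²χ_B = 0` then every `P_a`, or every `B_a`,
lies in the radical.
-/

section Spanning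

variable {R M N : Type*} [CommRing R] [AddCommGroup M] [Module R M] [AddCommGroup N] [Module R N]
  {ι : Type*} {e : ι → M}

theorem LinearMap.apply_eq_zero_of_span_eq_top (hspan : Submodule.span R (Set.range e) = ⊤)
    (f : M →ₗ[R] N) (h : ∀ i, f (e i) = 0) (x : M) : f x = 0 :=
  LinearMap.congr_fun (LinearMap.ext_on_range (g := 0) hspan h) x

theorem jacobi_of_span_eq_top (hspan : Submodule.span R (Set.range e) = ⊤)
    (br : M →ₗ[R] M →ₗ[R] M)
    (h : ∀ i j k, br (e i) (br (e j) (e k)) + br (e j) (br (e k) (e i))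
      + br (e k) (br (e i) (e j)) = 0)
    (x y z : M) : br x (br y z) + br y (br z x) + br z (br x y) = 0 := by
  have extend_left : ∀ {y z : M},
      (∀ i, br (e i) (br y z) + br y (br z (e i)) + br z (br (e i) y) = 0) →
      ∀ x, br x (br y z) + br y (br z x) + br z (br x y) = 0 := fun {y z} hyz x => by
    simpa using (br.flip (br y z) + br y ∘ₗ br z + br z ∘ₗ br.flip y).apply_eq_zero_of_span_eq_top
      hspan (by simpa using hyz) x
  -- The Jacobiator is invariant under cyclic permutations, so extending the first slot suffices.
  have h₁ : ∀ x j k, br x (br (e j) (e k)) + br (e j) (br (e k) x) + br (e k) (br x (e j)) = 0 :=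
    fun x j k => extend_left (fun i => h i j k) x
  have h₂ : ∀ x y k, br x (br y (e k)) + br y (br (e k) x) + br (e k) (br x y) = 0 :=
    fun x y k => extend_left (fun i => by rw [← h₁ y k i]; abel) x
  exact extend_left (fun i => by rw [← h₂ y z i]; abel) x

theorem invariant_of_span_eq_top (hspan : Submodule.span R (Set.range e) = ⊤)
    (br : M →ₗ[R] M →ₗ[R] M) (Bil : M →ₗ[R] M →ₗ[R] N)
    (h : ∀ i j k, Bil (br (e k) (e i)) (e j) + Bil (e i) (br (e k) (e j)) = 0)
    (x y z : M) : Bil (br z x) y + Bil x (br z y) = 0 := by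
  have h₁ : ∀ i k y, Bil (br (e k) (e i)) y + Bil (e i) (br (e k) y) = 0 := fun i k =>
    (Bil (br (e k) (e i)) + Bil (e i) ∘ₗ br (e k)).apply_eq_zero_of_span_eq_top hspan
      (by simpa using (h i · k))
  have h₂ : ∀ k x y, Bil (br (e k) x) y + Bil x (br (e k) y) = 0 := fun k x y => by
    simpa using (Bil.flip y ∘ₗ br (e k) + Bil.flip (br (e k) y)).apply_eq_zero_of_span_eq_top
      hspan (by simpa using (h₁ · k y)) x
  simpa using (Bil.flip y ∘ₗ br.flip x + Bil x ∘ₗ br.flip y).apply_eq_zero_of_span_eq_top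
    hspan (by simpa using (h₂ · x y)) z

end Spanning

theorem Module.Basis.repr_eq_zero_of_forall_apply_eq_zero {R M ι : Type*} [CommRing R]
    [NoZeroDivisors R] [AddCommGroup M] [Module R M] [Fintype ι] (b : Module.Basis ι R M)
    (Bil : M →ₗ[R] M →ₗ[R] R) {x : M} (hx : ∀ y, Bil x y = 0) {i₀ : ι} {t : M}
    (ht : Bil (b i₀) t ≠ 0) (hother : ∀ i ≠ i₀, b.repr x i * Bil (b i) t = 0) :
    b.repr x i₀ = 0 := by
  have hexpand : Bil x t = ∑ i, b.repr x i * Bil (b i) t := by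
    nth_rewrite 1 [← b.sum_repr x]
    simp only [map_sum, map_smul, LinearMap.sum_apply, LinearMap.smul_apply, smul_eq_mul]
  rw [hx t, Finset.sum_eq_single i₀ (fun i _ hi => hother i hi) (by simp)] at hexpand
  exact (mul_eq_zero.mp hexpand.symm).resolve_right ht

theorem LinearMap.apply_self_eq_zero_of_antisymm {K M : Type*} [Field K] [CharZero K]
    [AddCommGroup M] [Module K M] (br : M →ₗ[K] M →ₗ[K] M) (h : ∀ x y, br x y = -br y x)
    (x : M) : br x x = 0 := by
  have h2 : (2 : K) • br x x = 0 := by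
    rw [two_smul]
    nth_rewrite 1 [h x x]
    exact neg_add_cancel _
  exact (smul_eq_zero.mp h2).resolve_left two_ne_zero

theorem kron_comm {D : ℕ} (a b : Fin D) : kron a b = kron b a := by
  simp [kron, eq_comm]

theorem kron_mul_kron_sub_kron_mul_kron {D : ℕ} (p q : {p : Fin D × Fin D // p.1 < p.2}) :
    kron p.1.1 q.1.1 * kron p.1.2 q.1.2 - kron p.1.1 q.1.2 * kron p.1.2 q.1.1
      = if p = q then 1 else 0 := by
  obtain ⟨⟨p₁, p₂⟩, hp⟩ := p
  obtain ⟨⟨q₁, q₂⟩, hq⟩ := q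
  simp only [kron, Subtype.mk.injEq, Prod.mk.injEq]
  split_ifs <;> grind

section ExtAdSGalilei

variable {D : ℕ} {V : Type*} [AddCommGroup V] [Module ℝ V]

structure IsExtAdSGalileiBracket (σ Λ χB : ℝ) (J Js : Fin D → Fin D → V) (B P : Fin D → V)
    (H Hs : V) (br : V →ₗ[ℝ] V →ₗ[ℝ] V) : Prop where
  anti : ∀ x y : V, br x y = - br y x
  J_J : ∀ a b c d, br (J a b) (J c d) =
    kron b c • J a d + kron a d • J b c - kron b d • J a c - kron a c • J b d
  J_Js : ∀ a b c d, br (J a b) (Js c d) =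
    kron b c • Js a d + kron a d • Js b c - kron b d • Js a c - kron a c • Js b d
  J_B : ∀ a b c, br (J a b) (B c) = kron c b • B a - kron c a • B b
  J_P : ∀ a b c, br (J a b) (P c) = kron c b • P a - kron c a • P b
  B_H : ∀ a, br (B a) H = P a
  P_H : ∀ a, br (P a) H = (-(σ * Λ ^ 2)) • B a
  B_B : ∀ a b, br (B a) (B b) = (-χB) • Js a b
  P_P : ∀ a b, br (P a) (P b) = (-(σ * Λ ^ 2 * χB)) • Js a b
  B_P : ∀ a b, br (B a) (P b) = (-(σ * Λ ^ 2 * χB) * kron a b) • Hs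
  J_H : ∀ a b, br (J a b) H = 0
  J_Hs : ∀ a b, br (J a b) Hs = 0
  Js_B : ∀ a b c, br (Js a b) (B c) = 0
  Js_P : ∀ a b c, br (Js a b) (P c) = 0
  Js_H : ∀ a b, br (Js a b) H = 0
  Js_Js : ∀ a b c d, br (Js a b) (Js c d) = 0
  Js_Hs : ∀ a b, br (Js a b) Hs = 0
  B_Hs : ∀ a, br (B a) Hs = 0
  P_Hs : ∀ a, br (P a) Hs = 0
  H_Hs : br H Hs = 0

structure IsExtAdSGalileiForm (σ Λ χB χJ : ℝ) (J Js : Fin D → Fin D → V) (B P : Fin D → V)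
    (H Hs : V) (Bil : V →ₗ[ℝ] V →ₗ[ℝ] ℝ) : Prop where
  symm : ∀ x y : V, Bil x y = Bil y x
  B_B : ∀ a b, Bil (B a) (B b) = χB * kron a b
  P_P : ∀ a b, Bil (P a) (P b) = σ * Λ ^ 2 * χB * kron a b
  J_Js : ∀ a b c d, Bil (J a b) (Js c d) = kron a c * kron b d - kron a d * kron b c
  H_Hs : Bil H Hs = 1
  J_J : ∀ a b c d, Bil (J a b) (J c d) = χJ * (kron a c * kron b d - kron a d * kron b c)
  J_B : ∀ a b c, Bil (J a b) (B c) = 0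
  J_P : ∀ a b c, Bil (J a b) (P c) = 0
  J_H : ∀ a b, Bil (J a b) H = 0
  J_Hs : ∀ a b, Bil (J a b) Hs = 0
  B_P : ∀ a b, Bil (B a) (P b) = 0
  B_H : ∀ a, Bil (B a) H = 0
  B_Js : ∀ a b c, Bil (B a) (Js b c) = 0
  B_Hs : ∀ a, Bil (B a) Hs = 0
  P_H : ∀ a, Bil (P a) H = 0
  P_Js : ∀ a b c, Bil (P a) (Js b c) = 0
  P_Hs : ∀ a, Bil (P a) Hs = 0
  H_Js : ∀ a b, Bil H (Js a b) = 0
  Js_Js : ∀ a b c d, Bil (Js a b) (Js c d) = 0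
  Js_Hs : ∀ a b, Bil (Js a b) Hs = 0
  Hs_Hs : Bil Hs Hs = 0

variable {σ Λ χB χJ : ℝ} {J Js : Fin D → Fin D → V} {B P : Fin D → V} {H Hs : V}

set_option maxHeartbeats 1000000 in
theorem IsExtAdSGalileiBracket.jacobi {br : V →ₗ[ℝ] V →ₗ[ℝ] V}
    (h : IsExtAdSGalileiBracket σ Λ χB J Js B P H Hs br)
    (hJ : ∀ a b, J a b = - J b a) (hJs : ∀ a b, Js a b = - Js b a)
    (hspan : Submodule.span ℝ (Set.range (adsGalExtFam J B P H Js Hs)) = ⊤) (x y z : V) :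
    br x (br y z) + br y (br z x) + br z (br x y) = 0 := by
  have hself := br.apply_self_eq_zero_of_antisymm h.anti
  -- As antisymmetrisations of unconstrained families, `J a b` and `J b a` become combinations of
  -- the same atoms, so that the identity can be compared coefficientwise.
  obtain ⟨K, hK⟩ : ∃ K : Fin D → Fin D → V, ∀ a b, J a b = (2⁻¹ : ℝ) • (K a b - K b a) :=
    ⟨J, fun a b => by rw [hJ b a]; module⟩
  obtain ⟨Ks, hKs⟩ : ∃ Ks : Fin D → Fin D → V, ∀ a b, Js a b = (2⁻¹ : ℝ) • (Ks a b - Ks b a) :=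
    ⟨Js, fun a b => by rw [hJs b a]; module⟩
  refine jacobi_of_span_eq_top hspan br ?_ x y z
  rintro (p | a | a | u | p | u) (q | b | b | v | q | v) (r | c | c | w | r | w) <;>
    simp only [adsGalExtFam, h.J_J, h.J_Js, h.J_B, h.J_P, h.B_H, h.P_H, h.B_B, h.P_P, h.B_P,
      h.J_H, h.J_Hs, h.Js_B, h.Js_P, h.Js_H, h.Js_Js, h.Js_Hs, h.B_Hs, h.P_Hs, h.H_Hs,
      h.anti (Js _ _) (J _ _), h.anti (B _) (J _ _), h.anti (P _) (J _ _), h.anti H (J _ _),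
      h.anti Hs (J _ _), h.anti H (B _), h.anti H (P _), h.anti (P _) (B _), h.anti Hs (B _),
      h.anti Hs (P _), h.anti (B _) (Js _ _), h.anti (P _) (Js _ _), h.anti H (Js _ _),
      h.anti Hs (Js _ _), h.anti Hs H, hself, map_add, map_sub, map_neg, map_smul, map_zero,
      smul_zero, smul_neg, neg_zero, neg_neg] <;>
    (try simp only [hK, hKs]) <;>
    match_scalars <;>
    (try simp only [kron_comm]) <;>
    ring1

set_option maxHeartbeats 1000000 in
theorem IsExtAdSGalileiForm.invariant {br : V →ₗ[ℝ] V →ₗ[ℝ] V} {Bil : V →ₗ[ℝ] V →ₗ[ℝ] ℝ}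
    (h : IsExtAdSGalileiBracket σ Λ χB J Js B P H Hs br)
    (hF : IsExtAdSGalileiForm σ Λ χB χJ J Js B P H Hs Bil)
    (hspan : Submodule.span ℝ (Set.range (adsGalExtFam J B P H Js Hs)) = ⊤) (x y z : V) :
    Bil (br z x) y + Bil x (br z y) = 0 := by
  have hself := br.apply_self_eq_zero_of_antisymm h.anti
  refine invariant_of_span_eq_top hspan br Bil ?_ x y z
  rintro (p | a | a | u | p | u) (q | b | b | v | q | v) (r | c | c | w | r | w) <;>
    simp only [adsGalExtFam, h.J_J, h.J_Js, h.J_B, h.J_P, h.B_H, h.P_H, h.B_B, h.P_P, h.B_P,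
      h.J_H, h.J_Hs, h.Js_B, h.Js_P, h.Js_H, h.Js_Js, h.Js_Hs, h.B_Hs, h.P_Hs, h.H_Hs,
      h.anti (Js _ _) (J _ _), h.anti (B _) (J _ _), h.anti (P _) (J _ _), h.anti H (J _ _),
      h.anti Hs (J _ _), h.anti H (B _), h.anti H (P _), h.anti (P _) (B _), h.anti Hs (B _),
      h.anti Hs (P _), h.anti (B _) (Js _ _), h.anti (P _) (Js _ _), h.anti H (Js _ _),
      h.anti Hs (Js _ _), h.anti Hs H, hself,
      hF.B_B, hF.P_P, hF.J_Js, hF.H_Hs, hF.J_J, hF.J_B, hF.J_P, hF.J_H, hF.J_Hs, hF.B_P,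
      hF.B_H, hF.B_Js, hF.B_Hs, hF.P_H, hF.P_Js, hF.P_Hs, hF.H_Js, hF.Js_Js, hF.Js_Hs, hF.Hs_Hs,
      hF.symm (Js _ _) (J _ _), hF.symm (B _) (J _ _), hF.symm (P _) (J _ _), hF.symm H (J _ _),
      hF.symm Hs (J _ _), hF.symm (P _) (B _), hF.symm H (B _), hF.symm (Js _ _) (B _),
      hF.symm Hs (B _), hF.symm H (P _), hF.symm (Js _ _) (P _), hF.symm Hs (P _),
      hF.symm (Js _ _) H, hF.symm Hs H, hF.symm Hs (Js _ _),
      map_add, map_sub, map_neg, map_smul, map_zero, LinearMap.add_apply, LinearMap.sub_apply,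
      LinearMap.neg_apply, LinearMap.smul_apply, LinearMap.zero_apply, smul_eq_mul] <;>
    (try simp only [kron_comm]) <;>
    ring1

theorem IsExtAdSGalileiForm.exists_ne_zero_forall_eq_zero [NeZero D] {Bil : V →ₗ[ℝ] V →ₗ[ℝ] ℝ}
    (hF : IsExtAdSGalileiForm σ Λ χB χJ J Js B P H Hs Bil) {b : Module.Basis _ ℝ V}
    (hb : ⇑b = adsGalExtFam J B P H Js Hs) (h : Λ ^ 2 * χB = 0) :
    ∃ x ≠ 0, ∀ y, Bil x y = 0 := by
  obtain hΛ | hχB := mul_eq_zero.mp h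
  · refine ⟨P 0, by simpa [hb, adsGalExtFam] using b.ne_zero (.inr (.inr (.inl 0))), fun y => ?_⟩
    refine LinearMap.congr_fun (b.ext (f₂ := 0) ?_) y
    rintro (p | a | a | u | p | u) <;>
      simp [hb, adsGalExtFam, hF.P_P, hF.P_H, hF.P_Js, hF.P_Hs, hF.symm (P _) (J _ _), hF.J_P,
        hF.symm (P _) (B _), hF.B_P, hΛ]
  · refine ⟨B 0, by simpa [hb, adsGalExtFam] using b.ne_zero (.inr (.inl 0)), fun y => ?_⟩
    refine LinearMap.congr_fun (b.ext (f₂ := 0) ?_) y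
    rintro (p | a | a | u | p | u) <;>
      simp [hb, adsGalExtFam, hF.B_B, hF.B_P, hF.B_H, hF.B_Js, hF.B_Hs, hF.symm (B _) (J _ _),
        hF.J_B, hχB]

theorem IsExtAdSGalileiForm.repr_B_eq_zero {Bil : V →ₗ[ℝ] V →ₗ[ℝ] ℝ}
    (hF : IsExtAdSGalileiForm σ Λ χB χJ J Js B P H Hs Bil) {b : Module.Basis _ ℝ V}
    (hb : ⇑b = adsGalExtFam J B P H Js Hs) {x : V} (hx : ∀ y, Bil x y = 0) (hχB : χB ≠ 0)
    (a : Fin D) : b.repr x (.inr (.inl a)) = 0 := by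
  refine b.repr_eq_zero_of_forall_apply_eq_zero Bil hx (t := B a)
    (by simp [hb, adsGalExtFam, hF.B_B, kron, hχB]) ?_
  rintro (q | c | c | ⟨⟩ | q | ⟨⟩) hi <;>
    simp [hb, adsGalExtFam, kron, hF.B_B, hF.symm (P _) (B _), hF.symm H (B _),
      hF.symm (Js _ _) (B _), hF.symm Hs (B _), hF.J_B, hF.B_P, hF.B_H, hF.B_Js, hF.B_Hs]
  rintro rfl
  exact absurd rfl hi

theorem IsExtAdSGalileiForm.repr_P_eq_zero {Bil : V →ₗ[ℝ] V →ₗ[ℝ] ℝ}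
    (hF : IsExtAdSGalileiForm σ Λ χB χJ J Js B P H Hs Bil) {b : Module.Basis _ ℝ V}
    (hb : ⇑b = adsGalExtFam J B P H Js Hs) {x : V} (hx : ∀ y, Bil x y = 0)
    (hσΛχB : σ * Λ ^ 2 * χB ≠ 0) (a : Fin D) : b.repr x (.inr (.inr (.inl a))) = 0 := by
  refine b.repr_eq_zero_of_forall_apply_eq_zero Bil hx (t := P a)
    (by simp [hb, adsGalExtFam, hF.P_P, kron, hσΛχB]) ?_
  rintro (q | c | c | ⟨⟩ | q | ⟨⟩) hi <;>
    simp [hb, adsGalExtFam, kron, hF.P_P, hF.symm H (P _), hF.symm (Js _ _) (P _),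
      hF.symm Hs (P _), hF.J_P, hF.B_P, hF.P_H, hF.P_Js, hF.P_Hs]
  rintro rfl
  exact absurd rfl hi

theorem IsExtAdSGalileiForm.repr_J_eq_zero {Bil : V →ₗ[ℝ] V →ₗ[ℝ] ℝ}
    (hF : IsExtAdSGalileiForm σ Λ χB χJ J Js B P H Hs Bil) {b : Module.Basis _ ℝ V}
    (hb : ⇑b = adsGalExtFam J B P H Js Hs) {x : V} (hx : ∀ y, Bil x y = 0)
    (p : {p : Fin D × Fin D // p.1 < p.2}) : b.repr x (.inl p) = 0 := by
  refine b.repr_eq_zero_of_forall_apply_eq_zero Bil hx (t := Js p.1.1 p.1.2)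
    (by simp [hb, adsGalExtFam, hF.J_Js, kron_mul_kron_sub_kron_mul_kron]) ?_
  rintro (q | c | c | ⟨⟩ | q | ⟨⟩) hi <;>
    simp [hb, adsGalExtFam, hF.J_Js, kron_mul_kron_sub_kron_mul_kron, hF.B_Js, hF.P_Js,
      hF.H_Js, hF.Js_Js, hF.symm Hs (Js _ _), hF.Js_Hs]
  rintro rfl
  exact absurd rfl hi

theorem IsExtAdSGalileiForm.repr_H_eq_zero {Bil : V →ₗ[ℝ] V →ₗ[ℝ] ℝ}
    (hF : IsExtAdSGalileiForm σ Λ χB χJ J Js B P H Hs Bil) {b : Module.Basis _ ℝ V}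
    (hb : ⇑b = adsGalExtFam J B P H Js Hs) {x : V} (hx : ∀ y, Bil x y = 0) :
    b.repr x (.inr (.inr (.inr (.inl ())))) = 0 := by
  refine b.repr_eq_zero_of_forall_apply_eq_zero Bil hx (t := Hs)
    (by simp [hb, adsGalExtFam, hF.H_Hs]) ?_
  rintro (q | c | c | ⟨⟩ | q | ⟨⟩) hi <;>
    simp [hb, adsGalExtFam, hF.J_Hs, hF.B_Hs, hF.P_Hs, hF.Js_Hs, hF.Hs_Hs] at hi ⊢

theorem IsExtAdSGalileiForm.repr_Js_eq_zero {Bil : V →ₗ[ℝ] V →ₗ[ℝ] ℝ}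
    (hF : IsExtAdSGalileiForm σ Λ χB χJ J Js B P H Hs Bil) {b : Module.Basis _ ℝ V}
    (hb : ⇑b = adsGalExtFam J B P H Js Hs) {x : V} (hx : ∀ y, Bil x y = 0)
    (p : {p : Fin D × Fin D // p.1 < p.2}) : b.repr x (.inr (.inr (.inr (.inr (.inl p))))) = 0 := by
  refine b.repr_eq_zero_of_forall_apply_eq_zero Bil hx (t := J p.1.1 p.1.2)
    (by simp [hb, adsGalExtFam, hF.symm (Js _ _) (J _ _), hF.J_Js,
      kron_mul_kron_sub_kron_mul_kron]) ?_
  rintro (q | c | c | ⟨⟩ | q | ⟨⟩) hi <;>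
    simp [hb, adsGalExtFam, hF.repr_J_eq_zero hb hx, hF.symm (B _) (J _ _),
      hF.symm (P _) (J _ _), hF.symm H (J _ _), hF.symm (Js _ _) (J _ _), hF.symm Hs (J _ _),
      hF.J_B, hF.J_P, hF.J_H, hF.J_Js, hF.J_Hs, kron_mul_kron_sub_kron_mul_kron]
  rintro rfl
  exact absurd rfl hi

theorem IsExtAdSGalileiForm.repr_Hs_eq_zero {Bil : V →ₗ[ℝ] V →ₗ[ℝ] ℝ}
    (hF : IsExtAdSGalileiForm σ Λ χB χJ J Js B P H Hs Bil) {b : Module.Basis _ ℝ V}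
    (hb : ⇑b = adsGalExtFam J B P H Js Hs) {x : V} (hx : ∀ y, Bil x y = 0) :
    b.repr x (.inr (.inr (.inr (.inr (.inr ()))))) = 0 := by
  refine b.repr_eq_zero_of_forall_apply_eq_zero Bil hx (t := H)
    (by simp [hb, adsGalExtFam, hF.symm Hs H, hF.H_Hs]) ?_
  rintro (q | c | c | ⟨⟩ | q | ⟨⟩) hi <;>
    simp [hb, adsGalExtFam, hF.repr_H_eq_zero hb hx, hF.J_H, hF.B_H, hF.P_H,
      hF.symm (Js _ _) H, hF.H_Js] at hi ⊢

theorem IsExtAdSGalileiForm.nondegenerate_iff [NeZero D] {Bil : V →ₗ[ℝ] V →ₗ[ℝ] ℝ}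
    (hF : IsExtAdSGalileiForm σ Λ χB χJ J Js B P H Hs Bil) (hσ : σ ≠ 0) {b : Module.Basis _ ℝ V}
    (hb : ⇑b = adsGalExtFam J B P H Js Hs) :
    (∀ x : V, (∀ y : V, Bil x y = 0) → x = 0) ↔ Λ ^ 2 * χB ≠ 0 := by
  refine ⟨fun hnd hzero => ?_, fun hne x hx => ?_⟩
  · obtain ⟨x, hx0, hx⟩ := hF.exists_ne_zero_forall_eq_zero hb hzero
    exact hx0 (hnd x hx)
  · have hχB : χB ≠ 0 := right_ne_zero_of_mul hne
    have hσΛχB : σ * Λ ^ 2 * χB ≠ 0 := by rw [mul_assoc]; exact mul_ne_zero hσ hne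
    refine b.repr.map_eq_zero_iff.mp (Finsupp.ext ?_)
    rintro (p | a | a | ⟨⟩ | p | ⟨⟩)
    exacts [hF.repr_J_eq_zero hb hx p, hF.repr_B_eq_zero hb hx hχB a,
      hF.repr_P_eq_zero hb hx hσΛχB a, hF.repr_H_eq_zero hb hx, hF.repr_Js_eq_zero hb hx p,
      hF.repr_Hs_eq_zero hb hx]

end ExtAdSGalilei

theorem extended_ads_galilei_algebra_general
    (D : ℕ) (hD : 2 ≤ D) (σ : ℝ) (hσ : σ = 1 ∨ σ = -1) (Λ χB χJ : ℝ)
    (V : Type*) [AddCommGroup V] [Module ℝ V]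
    (J Js : Fin D → Fin D → V) (B P : Fin D → V) (H Hs : V)
    (hJanti : ∀ a b, J a b = - J b a)
    (hJsanti : ∀ a b, Js a b = - Js b a)
    (hindep : LinearIndependent ℝ (adsGalExtFam J B P H Js Hs))
    (hspan : Submodule.span ℝ (Set.range (adsGalExtFam J B P H Js Hs)) = ⊤)
    (br : V →ₗ[ℝ] V →ₗ[ℝ] V)
    (hbr_anti : ∀ x y : V, br x y = - br y x)
    (hJJ : ∀ a b c d, br (J a b) (J c d) =
      kron b c • J a d + kron a d • J b c - kron b d • J a c - kron a c • J b d)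
    (hJJs : ∀ a b c d, br (J a b) (Js c d) =
      kron b c • Js a d + kron a d • Js b c - kron b d • Js a c - kron a c • Js b d)
    (hJB : ∀ a b c, br (J a b) (B c) = kron c b • B a - kron c a • B b)
    (hJP : ∀ a b c, br (J a b) (P c) = kron c b • P a - kron c a • P b)
    (hBH : ∀ a, br (B a) H = P a)
    (hPH : ∀ a, br (P a) H = (-(σ * Λ ^ 2)) • B a)
    (hBB : ∀ a b, br (B a) (B b) = (-χB) • Js a b)
    (hPP : ∀ a b, br (P a) (P b) = (-(σ * Λ ^ 2 * χB)) • Js a b)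
    (hBP : ∀ a b, br (B a) (P b) = (-(σ * Λ ^ 2 * χB) * kron a b) • Hs)
    (hJH : ∀ a b, br (J a b) H = 0)
    (hJHs : ∀ a b, br (J a b) Hs = 0)
    (hJsB : ∀ a b c, br (Js a b) (B c) = 0)
    (hJsP : ∀ a b c, br (Js a b) (P c) = 0)
    (hJsH : ∀ a b, br (Js a b) H = 0)
    (hJsJs : ∀ a b c d, br (Js a b) (Js c d) = 0)
    (hJsHs : ∀ a b, br (Js a b) Hs = 0)
    (hBHs : ∀ a, br (B a) Hs = 0)
    (hPHs : ∀ a, br (P a) Hs = 0)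
    (hHHs : br H Hs = 0)
    (Bil : V →ₗ[ℝ] V →ₗ[ℝ] ℝ)
    (hsymm : ∀ x y : V, Bil x y = Bil y x)
    (hBBF : ∀ a b, Bil (B a) (B b) = χB * kron a b)
    (hPPF : ∀ a b, Bil (P a) (P b) = σ * Λ ^ 2 * χB * kron a b)
    (hJJsF : ∀ a b c d, Bil (J a b) (Js c d) = kron a c * kron b d - kron a d * kron b c)
    (hHHsF : Bil H Hs = 1)
    (hJJF : ∀ a b c d, Bil (J a b) (J c d) = χJ * (kron a c * kron b d - kron a d * kron b c))
    (hJBF : ∀ a b c, Bil (J a b) (B c) = 0)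
    (hJPF : ∀ a b c, Bil (J a b) (P c) = 0)
    (hJHF : ∀ a b, Bil (J a b) H = 0)
    (hJHsF : ∀ a b, Bil (J a b) Hs = 0)
    (hBPF : ∀ a b, Bil (B a) (P b) = 0)
    (hBHF : ∀ a, Bil (B a) H = 0)
    (hBJsF : ∀ a b c, Bil (B a) (Js b c) = 0)
    (hBHsF : ∀ a, Bil (B a) Hs = 0)
    (hPHF : ∀ a, Bil (P a) H = 0)
    (hPJsF : ∀ a b c, Bil (P a) (Js b c) = 0)
    (hPHsF : ∀ a, Bil (P a) Hs = 0)
    (hHJsF : ∀ a b, Bil H (Js a b) = 0)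
    (hJsJsF : ∀ a b c d, Bil (Js a b) (Js c d) = 0)
    (hJsHsF : ∀ a b, Bil (Js a b) Hs = 0)
    (hHsHsF : Bil Hs Hs = 0) :
    (∀ x y z : V, br x (br y z) + br y (br z x) + br z (br x y) = 0) ∧
    (∀ x y z : V, Bil (br z x) y + Bil x (br z y) = 0) ∧
    ((∀ x : V, (∀ y : V, Bil x y = 0) → x = 0) ↔ Λ ^ 2 * χB ≠ 0) := by
  have : NeZero D := ⟨by omega⟩
  have hσ₀ : σ ≠ 0 := by rcases hσ with rfl | rfl <;> norm_num
  have hbr : IsExtAdSGalileiBracket σ Λ χB J Js B P H Hs br :=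
    ⟨hbr_anti, hJJ, hJJs, hJB, hJP, hBH, hPH, hBB, hPP, hBP, hJH, hJHs, hJsB, hJsP, hJsH, hJsJs,
      hJsHs, hBHs, hPHs, hHHs⟩
  have hBil : IsExtAdSGalileiForm σ Λ χB χJ J Js B P H Hs Bil :=
    ⟨hsymm, hBBF, hPPF, hJJsF, hHHsF, hJJF, hJBF, hJPF, hJHF, hJHsF, hBPF, hBHF, hBJsF, hBHsF,
      hPHF, hPJsF, hPHsF, hHJsF, hJsJsF, hJsHsF, hHsHsF⟩
  exact ⟨hbr.jacobi hJanti hJsanti hspan, hBil.invariant hbr hspan,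
    hBil.nondegenerate_iff hσ₀ (Module.Basis.coe_mk hindep hspan.ge)⟩

/-- The extended (A)dS-Galilei algebra in `D+1` dimensions: its bracket
satisfies the Jacobi identity, the indicated symmetric bilinear form is invariant, and it is
nondegenerate iff `Λ²χ_B ≠ 0`. -/
theorem extended_ads_galilei_algebra
    (D : ℕ) (hD : 2 ≤ D) (σ : ℝ) (hσ : σ = 1 ∨ σ = -1) (Λ χB χH χJ : ℝ)
    (V : Type*) [AddCommGroup V] [Module ℝ V]
    (J Js : Fin D → Fin D → V) (B P : Fin D → V) (H Hs : V)
    (hJanti : ∀ a b, J a b = - J b a)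
    (hJsanti : ∀ a b, Js a b = - Js b a)
    (hindep : LinearIndependent ℝ (adsGalExtFam J B P H Js Hs))
    (hspan : Submodule.span ℝ (Set.range (adsGalExtFam J B P H Js Hs)) = ⊤)
    (br : V →ₗ[ℝ] V →ₗ[ℝ] V)
    (hbr_anti : ∀ x y : V, br x y = - br y x)
    (hJJ : ∀ a b c d, br (J a b) (J c d) =
      kron b c • J a d + kron a d • J b c - kron b d • J a c - kron a c • J b d)
    (hJJs : ∀ a b c d, br (J a b) (Js c d) =
      kron b c • Js a d + kron a d • Js b c - kron b d • Js a c - kron a c • Js b d)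
    (hJB : ∀ a b c, br (J a b) (B c) = kron c b • B a - kron c a • B b)
    (hJP : ∀ a b c, br (J a b) (P c) = kron c b • P a - kron c a • P b)
    (hBH : ∀ a, br (B a) H = P a)
    (hPH : ∀ a, br (P a) H = (-(σ * Λ ^ 2)) • B a)
    (hBB : ∀ a b, br (B a) (B b) = (-χB) • Js a b)
    (hPP : ∀ a b, br (P a) (P b) = (-(σ * Λ ^ 2 * χB)) • Js a b)
    (hBP : ∀ a b, br (B a) (P b) = (-(σ * Λ ^ 2 * χB) * kron a b) • Hs)
    (hJH : ∀ a b, br (J a b) H = 0)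
    (hJHs : ∀ a b, br (J a b) Hs = 0)
    (hJsB : ∀ a b c, br (Js a b) (B c) = 0)
    (hJsP : ∀ a b c, br (Js a b) (P c) = 0)
    (hJsH : ∀ a b, br (Js a b) H = 0)
    (hJsJs : ∀ a b c d, br (Js a b) (Js c d) = 0)
    (hJsHs : ∀ a b, br (Js a b) Hs = 0)
    (hBHs : ∀ a, br (B a) Hs = 0)
    (hPHs : ∀ a, br (P a) Hs = 0)
    (hHHs : br H Hs = 0)
    (Bil : V →ₗ[ℝ] V →ₗ[ℝ] ℝ)
    (hsymm : ∀ x y : V, Bil x y = Bil y x)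
    (hBBF : ∀ a b, Bil (B a) (B b) = χB * kron a b)
    (hPPF : ∀ a b, Bil (P a) (P b) = σ * Λ ^ 2 * χB * kron a b)
    (hJJsF : ∀ a b c d, Bil (J a b) (Js c d) = kron a c * kron b d - kron a d * kron b c)
    (hHHsF : Bil H Hs = 1)
    (hHHF : Bil H H = χH)
    (hJJF : ∀ a b c d, Bil (J a b) (J c d) = χJ * (kron a c * kron b d - kron a d * kron b c))
    (hJBF : ∀ a b c, Bil (J a b) (B c) = 0)
    (hJPF : ∀ a b c, Bil (J a b) (P c) = 0)
    (hJHF : ∀ a b, Bil (J a b) H = 0)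
    (hJHsF : ∀ a b, Bil (J a b) Hs = 0)
    (hBPF : ∀ a b, Bil (B a) (P b) = 0)
    (hBHF : ∀ a, Bil (B a) H = 0)
    (hBJsF : ∀ a b c, Bil (B a) (Js b c) = 0)
    (hBHsF : ∀ a, Bil (B a) Hs = 0)
    (hPHF : ∀ a, Bil (P a) H = 0)
    (hPJsF : ∀ a b c, Bil (P a) (Js b c) = 0)
    (hPHsF : ∀ a, Bil (P a) Hs = 0)
    (hHJsF : ∀ a b, Bil H (Js a b) = 0)
    (hJsJsF : ∀ a b c d, Bil (Js a b) (Js c d) = 0)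
    (hJsHsF : ∀ a b, Bil (Js a b) Hs = 0)
    (hHsHsF : Bil Hs Hs = 0) :
    (∀ x y z : V, br x (br y z) + br y (br z x) + br z (br x y) = 0) ∧
    (∀ x y z : V, Bil (br z x) y + Bil x (br z y) = 0) ∧
    ((∀ x : V, (∀ y : V, Bil x y = 0) → x = 0) ↔ Λ ^ 2 * χB ≠ 0) :=
  extended_ads_galilei_algebra_general D hD σ hσ Λ χB χJ V J Js B P H Hs hJanti hJsanti hindep hspan
    br hbr_anti hJJ hJJs hJB hJP hBH hPH hBB hPP hBP hJH hJHs hJsB hJsP hJsH hJsJs hJsHs hBHs hPHs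
    hHHs Bil hsymm hBBF hPPF hJJsF hHHsF hJJF hJBF hJPF hJHF hJHsF hBPF hBHF hBJsF hBHsF hPHF hPJsF
    hPHsF hHJsF hJsJsF hJsHsF hHsHsF
end
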